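/- (Theorem 1, variance formula.) Let Y¹, Y⁰, Yᵃ, Yᵇ be mutually independent random variables, each exponentially distributed with rate 1. Let τ¹ be the honest random time on [s,t] associated with the intensity λ1 and driven by Y¹, and let τ⁰, τ⁰ₐ, τ⁰ᵦ be the honest random times on [s,t] associated with the intensity λ0 and driven by Y⁰, Yᵃ, Yᵇ respectively. Then Var(exp(-∫_{τ¹}^t λ0(u) du)) = P(max(τ⁰ₐ, τ⁰ᵦ) ≤ τ¹) - P(τ⁰ ≤ τ¹)². -/

import Mathlib

/-!
Put `X := ∫_{τ¹}^t λ₀`, a function of `Y¹`. For `y ≥ 0` and `x ∈ [s, t]` the honest time of `λ₀`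
driven by `y` is at most `x` exactly when `∫_x^t λ₀ ≤ y`, because `x ↦ ∫_x^t λ₀` is continuous and
antitone on `[s, t]`. Hence, almost surely, `{τ⁰ ≤ τ¹} = {X ≤ Y⁰}` and
`{max τ⁰ₐ τ⁰ᵦ ≤ τ¹} = {X ≤ Yᵃ} ∩ {X ≤ Yᵇ}`. Integrating out the exponential variables, which are
independent of `X` and satisfy `P(Y ≥ x) = e^{-x}`, gives `P(X ≤ Y⁰) = E[e^{-X}]` and
`P(X ≤ Yᵃ, X ≤ Yᵇ) = E[e^{-2X}]`, and `Var(e^{-X}) = E[e^{-2X}] - E[e^{-X}]²`.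
-/

open MeasureTheory ProbabilityTheory Real

/-- The honest random time on `[s,t]` associated with the intensity `lam`,
driven by the value `y`: `max (s, inf {r ∈ [s,t] : ∫_r^t lam ≤ y})`. -/
noncomputable def honestTime (s t : ℝ) (lam : ℝ → ℝ) (y : ℝ) : ℝ :=
  max s (sInf {r | r ∈ Set.Icc s t ∧ ∫ u in r..t, lam u ≤ y})

open Set

lemma continuous_integral_left {f : ℝ → ℝ} (hf : Continuous f) (b : ℝ) :
    Continuous fun a => ∫ x in a..b, f x := by
  simp only [intervalIntegral.integral_symm b]
  exact (intervalIntegral.continuous_primitive (fun _ _ => hf.intervalIntegrable _ _) b).neg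

lemma antitoneOn_integral_left {f : ℝ → ℝ} {s t : ℝ} (hf : IntervalIntegrable f volume s t)
    (hf_nonneg : ∀ u ∈ Icc s t, 0 ≤ f u) :
    AntitoneOn (fun a => ∫ x in a..t, f x) (Icc s t) := by
  intro a ha b hb hab
  refine intervalIntegral.integral_mono_interval hab hb.2 le_rfl ?_
    (hf.mono_set (uIcc_subset_uIcc (mem_uIcc_of_le ha.1 ha.2) right_mem_uIcc))
  filter_upwards [ae_restrict_mem measurableSet_Ioc] with u hu
  exact hf_nonneg u ⟨ha.1.trans hu.1.le, hu.2⟩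

section HonestTime

variable {s t : ℝ} {lam mu : ℝ → ℝ} {y : ℝ}

lemma mem_honestTime_set_right (hst : s ≤ t) (hy : 0 ≤ y) :
    t ∈ {r | r ∈ Icc s t ∧ ∫ u in r..t, lam u ≤ y} :=
  ⟨⟨hst, le_rfl⟩, by simpa using hy⟩

lemma honestTime_mem_Icc (hst : s ≤ t) (hy : 0 ≤ y) : honestTime s t lam y ∈ Icc s t :=
  ⟨le_max_left _ _, max_le hst (csInf_le ⟨s, fun _ hr => hr.1.1⟩ (mem_honestTime_set_right hst hy))⟩

lemma antitone_honestTime_max_zero (hst : s ≤ t) :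
    Antitone fun y => honestTime s t lam (max y 0) := by
  intro y₁ y₂ hy
  refine max_le_max le_rfl (csInf_le_csInf ⟨s, fun _ hr => hr.1.1⟩
    (nonempty_of_mem (mem_honestTime_set_right hst (le_max_right y₁ 0))) ?_)
  exact fun r hr => ⟨hr.1, hr.2.trans (max_le_max_right 0 hy)⟩

lemma honestTime_le_iff (hst : s ≤ t) (hlam : Continuous lam)
    (hlam_nonneg : ∀ u ∈ Icc s t, 0 ≤ lam u) {x : ℝ} (hx : x ∈ Icc s t) (hy : 0 ≤ y) :
    honestTime s t lam y ≤ x ↔ ∫ u in x..t, lam u ≤ y := by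
  set S := {r | r ∈ Icc s t ∧ ∫ u in r..t, lam u ≤ y}
  have hS_bdd : BddBelow S := ⟨s, fun _ hr => hr.1.1⟩
  refine ⟨fun h => ?_, fun h => max_le hx.1 (csInf_le hS_bdd ⟨hx, h⟩)⟩
  have hS_closed : IsClosed S :=
    isClosed_Icc.inter (isClosed_le (continuous_integral_left hlam t) continuous_const)
  have hS_inf : sInf S ∈ S :=
    hS_closed.csInf_mem (nonempty_of_mem (mem_honestTime_set_right hst hy)) hS_bdd
  exact (antitoneOn_integral_left (hlam.intervalIntegrable s t) hlam_nonneg hS_inf.1 hx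
    ((le_max_right _ _).trans h)).trans hS_inf.2

/-- Clamping `y` at `0` changes nothing for `y ≥ 0` but makes the honest time antitone, hence
measurable, in `y`. -/
noncomputable def integralFromHonestTime (s t : ℝ) (lam mu : ℝ → ℝ) (y : ℝ) : ℝ :=
  ∫ u in honestTime s t lam (max y 0)..t, mu u

lemma integralFromHonestTime_of_nonneg (hy : 0 ≤ y) :
    integralFromHonestTime s t lam mu y = ∫ u in honestTime s t lam y..t, mu u := by
  rw [integralFromHonestTime, max_eq_left hy]

lemma measurable_integralFromHonestTime (hst : s ≤ t) (hmu : Continuous mu) :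
    Measurable (integralFromHonestTime s t lam mu) :=
  (continuous_integral_left hmu t).measurable.comp (antitone_honestTime_max_zero hst).measurable

lemma integralFromHonestTime_nonneg (hst : s ≤ t) (hmu_nonneg : ∀ u ∈ Icc s t, 0 ≤ mu u)
    (y : ℝ) : 0 ≤ integralFromHonestTime s t lam mu y := by
  have hτ := honestTime_mem_Icc (lam := lam) hst (le_max_right y 0)
  exact intervalIntegral.integral_nonneg hτ.2 fun u hu => hmu_nonneg u ⟨hτ.1.trans hu.1, hu.2⟩

lemma honestTime_le_honestTime_iff (hst : s ≤ t) (hmu : Continuous mu)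
    (hmu_nonneg : ∀ u ∈ Icc s t, 0 ≤ mu u) (hy : 0 ≤ y) {z : ℝ} (hz : 0 ≤ z) :
    honestTime s t mu z ≤ honestTime s t lam y ↔ integralFromHonestTime s t lam mu y ≤ z := by
  rw [integralFromHonestTime_of_nonneg hy]
  exact honestTime_le_iff hst hmu hmu_nonneg (honestTime_mem_Icc hst hy) hz

end HonestTime

lemma expMeasure_eq_withDensity (r : ℝ) :
    expMeasure r = volume.withDensity (exponentialPDF r) :=
  rfl

lemma expMeasure_Ici {r a : ℝ} (hr : 0 < r) (ha : 0 ≤ a) :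
    expMeasure r (Ici a) = ENNReal.ofReal (exp (-(r * a))) := by
  have := isProbabilityMeasure_expMeasure hr
  have h_Iio : expMeasure r (Iio a) = ENNReal.ofReal (1 - exp (-(r * a))) := by
    rw [expMeasure_eq_withDensity, withDensity_apply _ measurableSet_Iio,
      setLIntegral_congr Iio_ae_eq_Iic, lintegral_exponentialPDF_eq_antiDeriv hr, if_pos ha]
  have h_le : exp (-(r * a)) ≤ 1 := exp_le_one_iff.2 (by simp; positivity)
  rw [← compl_Iio, measure_compl measurableSet_Iio (measure_ne_top _ _), measure_univ, h_Iio,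
    ← ENNReal.ofReal_one, ← ENNReal.ofReal_sub _ (by linarith), sub_sub_cancel]

section Independence

variable {Ω : Type*} [MeasurableSpace Ω] {P : Measure Ω}

lemma ae_nonneg_of_map_eq_expMeasure {Y : Ω → ℝ} {r : ℝ} (hY : AEMeasurable Y P)
    (hY_law : P.map Y = expMeasure r) : ∀ᵐ ω ∂P, 0 ≤ Y ω := by
  refine ae_of_ae_map hY ?_
  rw [hY_law, ae_iff, expMeasure_eq_withDensity]
  simp only [not_le]
  exact (withDensity_apply _ measurableSet_Iio).trans (lintegral_exponentialPDF_of_nonpos le_rfl)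

variable [IsProbabilityMeasure P]

lemma ProbabilityTheory.IndepFun.measure_preimage_eq_lintegral {α β : Type*}
    [MeasurableSpace α] [MeasurableSpace β] {X : Ω → α} {Z : Ω → β} (hX : Measurable X)
    (hZ : Measurable Z) (hXZ : IndepFun X Z P) {A : Set (α × β)} (hA : MeasurableSet A) :
    P ((fun ω => (X ω, Z ω)) ⁻¹' A) = ∫⁻ ω, P.map Z (Prod.mk (X ω) ⁻¹' A) ∂P := by
  rw [← Measure.map_apply (hX.prodMk hZ) hA,
    (indepFun_iff_map_prod_eq_prod_map_map hX.aemeasurable hZ.aemeasurable).1 hXZ,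
    Measure.prod_apply hA, lintegral_map (measurable_measure_prodMk_left hA) hX]

variable {X Y Y' : Ω → ℝ} {r : ℝ}

lemma measure_le_of_indepFun_expMeasure (hX : Measurable X) (hY : Measurable Y)
    (hXY : IndepFun X Y P) (hr : 0 < r) (hY_law : P.map Y = expMeasure r)
    (hX_nonneg : ∀ ω, 0 ≤ X ω) :
    P {ω | X ω ≤ Y ω} = ∫⁻ ω, ENNReal.ofReal (exp (-(r * X ω))) ∂P := by
  rw [show {ω | X ω ≤ Y ω} = (fun ω => (X ω, Y ω)) ⁻¹' {p | p.1 ≤ p.2} from rfl,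
    hXY.measure_preimage_eq_lintegral hX hY (measurableSet_le measurable_fst measurable_snd),
    hY_law]
  exact lintegral_congr fun ω => expMeasure_Ici hr (hX_nonneg ω)

lemma measure_le_and_le_of_indepFun_expMeasure (hX : Measurable X) (hY : Measurable Y)
    (hY' : Measurable Y') (hX_YY' : IndepFun X (fun ω => (Y ω, Y' ω)) P)
    (hYY' : IndepFun Y Y' P) (hr : 0 < r) (hY_law : P.map Y = expMeasure r)
    (hY'_law : P.map Y' = expMeasure r) (hX_nonneg : ∀ ω, 0 ≤ X ω) :
    P {ω | X ω ≤ Y ω ∧ X ω ≤ Y' ω} = ∫⁻ ω, ENNReal.ofReal (exp (-(r * X ω)) ^ 2) ∂P := by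
  have := isProbabilityMeasure_expMeasure hr
  have hA : MeasurableSet {p : ℝ × ℝ × ℝ | p.1 ≤ p.2.1 ∧ p.1 ≤ p.2.2} :=
    (measurableSet_le measurable_fst measurable_snd.fst).inter
      (measurableSet_le measurable_fst measurable_snd.snd)
  rw [show {ω | X ω ≤ Y ω ∧ X ω ≤ Y' ω}
      = (fun ω => (X ω, Y ω, Y' ω)) ⁻¹' {p | p.1 ≤ p.2.1 ∧ p.1 ≤ p.2.2} from rfl,
    hX_YY'.measure_preimage_eq_lintegral hX (hY.prodMk hY') hA,
    (indepFun_iff_map_prod_eq_prod_map_map hY.aemeasurable hY'.aemeasurable).1 hYY',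
    hY_law, hY'_law]
  refine lintegral_congr fun ω => ?_
  rw [show Prod.mk (X ω) ⁻¹' {p : ℝ × ℝ × ℝ | p.1 ≤ p.2.1 ∧ p.1 ≤ p.2.2}
      = Ici (X ω) ×ˢ Ici (X ω) from rfl, Measure.prod_prod, expMeasure_Ici hr (hX_nonneg ω),
    ← ENNReal.ofReal_mul (exp_pos _).le, sq]

lemma memLp_exp_neg (hX : Measurable X) (hX_nonneg : ∀ ω, 0 ≤ X ω) (p : ENNReal) :
    MemLp (fun ω => exp (-X ω)) p P := by
  refine MemLp.of_bound (measurable_exp.comp hX.neg).aestronglyMeasurable 1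
    (ae_of_all _ fun ω => ?_)
  rw [norm_of_nonneg (exp_pos _).le]
  exact exp_le_one_iff.2 (neg_nonpos.2 (hX_nonneg ω))

theorem variance_exp_neg_eq_measure_le_sub_sq {Y₀ : Ω → ℝ} (hX : Measurable X)
    (hY₀ : Measurable Y₀) (hY : Measurable Y) (hY' : Measurable Y') (hXY₀ : IndepFun X Y₀ P)
    (hX_YY' : IndepFun X (fun ω => (Y ω, Y' ω)) P) (hYY' : IndepFun Y Y' P) (hr : 0 < r)
    (hY₀_law : P.map Y₀ = expMeasure r) (hY_law : P.map Y = expMeasure r)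
    (hY'_law : P.map Y' = expMeasure r) (hX_nonneg : ∀ ω, 0 ≤ X ω) :
    Var[fun ω => exp (-(r * X ω)); P]
      = (P {ω | X ω ≤ Y ω ∧ X ω ≤ Y' ω}).toReal - (P {ω | X ω ≤ Y₀ ω}).toReal ^ 2 := by
  have hrX_nonneg ω : 0 ≤ r * X ω := mul_nonneg hr.le (hX_nonneg ω)
  rw [variance_eq_sub (memLp_exp_neg (hX.const_mul r) hrX_nonneg 2),
    measure_le_and_le_of_indepFun_expMeasure hX hY hY' hX_YY' hYY' hr hY_law hY'_law hX_nonneg,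
    measure_le_of_indepFun_expMeasure hX hY₀ hXY₀ hr hY₀_law hX_nonneg,
    ← integral_eq_lintegral_of_nonneg_ae, ← integral_eq_lintegral_of_nonneg_ae]
  · rfl
  all_goals first | exact ae_of_all _ fun _ => by positivity | fun_prop

end Independence

theorem variance_estimator_P00_general
    {Ω : Type*} [MeasurableSpace Ω] (P : Measure Ω) [IsProbabilityMeasure P]
    (s t : ℝ) (hst : s < t)
    (lam0 lam1 : ℝ → ℝ) (hlam0 : Continuous lam0)
    (hlam0_nonneg : ∀ u ∈ Set.Icc s t, 0 ≤ lam0 u)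
    (Y1 Y0 Ya Yb : Ω → ℝ)
    (hY1 : Measurable Y1) (hY0 : Measurable Y0) (hYa : Measurable Ya) (hYb : Measurable Yb)
    (hY1law : P.map Y1 = expMeasure 1) (hY0law : P.map Y0 = expMeasure 1)
    (hYalaw : P.map Ya = expMeasure 1) (hYblaw : P.map Yb = expMeasure 1)
    (hindep : iIndepFun ![Y1, Y0, Ya, Yb] P) :
    variance (fun ω => Real.exp (-(∫ u in (honestTime s t lam1 (Y1 ω))..t, lam0 u))) P
      = (P {ω | max (honestTime s t lam0 (Ya ω)) (honestTime s t lam0 (Yb ω))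
            ≤ honestTime s t lam1 (Y1 ω)}).toReal
        - ((P {ω | honestTime s t lam0 (Y0 ω) ≤ honestTime s t lam1 (Y1 ω)}).toReal) ^ 2 := by
  set f := integralFromHonestTime s t lam1 lam0 with hf_def
  have hf : Measurable f := measurable_integralFromHonestTime hst.le hlam0
  have hY1_nonneg := ae_nonneg_of_map_eq_expMeasure hY1.aemeasurable hY1law
  have hτ_le_iff : ∀ᵐ ω ∂P, ∀ y, 0 ≤ y →
      (honestTime s t lam0 y ≤ honestTime s t lam1 (Y1 ω) ↔ f (Y1 ω) ≤ y) := by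
    filter_upwards [hY1_nonneg] with ω hω y hy
    exact honestTime_le_honestTime_iff hst.le hlam0 hlam0_nonneg hω hy
  have hA : P {ω | max (honestTime s t lam0 (Ya ω)) (honestTime s t lam0 (Yb ω))
      ≤ honestTime s t lam1 (Y1 ω)} = P {ω | f (Y1 ω) ≤ Ya ω ∧ f (Y1 ω) ≤ Yb ω} := by
    refine measure_congr (Filter.eventuallyEq_set.2 ?_)
    filter_upwards [hτ_le_iff, ae_nonneg_of_map_eq_expMeasure hYa.aemeasurable hYalaw,
      ae_nonneg_of_map_eq_expMeasure hYb.aemeasurable hYblaw] with ω h ha hb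
    simp only [max_le_iff, h _ ha, h _ hb]
  have hB : P {ω | honestTime s t lam0 (Y0 ω) ≤ honestTime s t lam1 (Y1 ω)}
      = P {ω | f (Y1 ω) ≤ Y0 ω} := by
    refine measure_congr (Filter.eventuallyEq_set.2 ?_)
    filter_upwards [hτ_le_iff, ae_nonneg_of_map_eq_expMeasure hY0.aemeasurable hY0law]
      with ω h h0 using h _ h0
  have hvar : variance (fun ω => exp (-(∫ u in (honestTime s t lam1 (Y1 ω))..t, lam0 u))) P
      = variance (fun ω => exp (-(1 * f (Y1 ω)))) P := by
    refine variance_congr ?_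
    filter_upwards [hY1_nonneg] with ω hω
    rw [one_mul, hf_def, integralFromHonestTime_of_nonneg hω]
  have hmeas : ∀ i, Measurable (![Y1, Y0, Ya, Yb] i) := by
    intro i; fin_cases i <;> assumption
  rw [hvar, hA, hB]
  exact variance_exp_neg_eq_measure_le_sub_sq (hf.comp hY1) hY0 hYa hYb
    ((hindep.indepFun (i := 0) (j := 1) (by decide)).comp hf measurable_id)
    ((hindep.indepFun_prodMk hmeas 2 3 0 (by decide) (by decide)).symm.comp hf measurable_id)
    (hindep.indepFun (i := 2) (j := 3) (by decide)) one_pos hY0law hYalaw hYblaw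
    (fun ω => integralFromHonestTime_nonneg hst.le hlam0_nonneg _)

/-- Theorem 1 (variance formula): with `τ¹` the honest time on `[s,t]` associated with `λ₁`
driven by `Y¹`, and `τ⁰, τ⁰ₐ, τ⁰ᵦ` the honest times associated with `λ₀` driven by
`Y⁰, Yᵃ, Yᵇ`, where `Y¹, Y⁰, Yᵃ, Yᵇ` are mutually independent `Exp(1)` random variables,
`Var(exp (-∫_{τ¹}^t λ₀(u) du)) = P(max (τ⁰ₐ, τ⁰ᵦ) ≤ τ¹) - P(τ⁰ ≤ τ¹)²`. -/
theorem variance_estimator_P00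
    {Ω : Type*} [MeasurableSpace Ω] (P : Measure Ω) [IsProbabilityMeasure P]
    (s t : ℝ) (hs : 0 ≤ s) (hst : s < t)
    (lam0 lam1 : ℝ → ℝ) (hlam0 : Continuous lam0) (hlam1 : Continuous lam1)
    (hlam0_nonneg : ∀ u ∈ Set.Icc s t, 0 ≤ lam0 u)
    (hlam1_nonneg : ∀ u ∈ Set.Icc s t, 0 ≤ lam1 u)
    (Y1 Y0 Ya Yb : Ω → ℝ)
    (hY1 : Measurable Y1) (hY0 : Measurable Y0) (hYa : Measurable Ya) (hYb : Measurable Yb)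
    (hY1law : P.map Y1 = expMeasure 1) (hY0law : P.map Y0 = expMeasure 1)
    (hYalaw : P.map Ya = expMeasure 1) (hYblaw : P.map Yb = expMeasure 1)
    (hindep : iIndepFun ![Y1, Y0, Ya, Yb] P) :
    variance (fun ω => Real.exp (-(∫ u in (honestTime s t lam1 (Y1 ω))..t, lam0 u))) P
      = (P {ω | max (honestTime s t lam0 (Ya ω)) (honestTime s t lam0 (Yb ω))
            ≤ honestTime s t lam1 (Y1 ω)}).toReal
        - ((P {ω | honestTime s t lam0 (Y0 ω) ≤ honestTime s t lam1 (Y1 ω)}).toReal) ^ 2 :=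
  variance_estimator_P00_general P s t hst lam0 lam1 hlam0 hlam0_nonneg Y1 Y0 Ya Yb hY1 hY0 hYa hYb
    hY1law hY0law hYalaw hYblaw hindep
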